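/- arXiv:2310.19506 — 5 statements merged into one kernel-verified Lean document; each statement's English description precedes it below -/
import Mathlib

section
/- The image of the harmonic projection is exactly the joint kernel of the two operators: range π = ker d ⊓ ker h, and moreover range π = ker (d ∘ h) ⊓ ker (h ∘ d). -/
/-- The image of the harmonic projection is the joint kernel of `d` and `h`,
and also the joint kernel of `d ∘ h` and `h ∘ d`. -/
theorem harmonic_projection_range
    {K : Type*} [CommRing K] {M : Type*} [AddCommGroup M] [Module K M]
    (d h : M →ₗ[K] M)
    (hdd : d ∘ₗ d = 0) (hhh : h ∘ₗ h = 0)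
    (hhdh : h ∘ₗ d ∘ₗ h = h) (hdhd : d ∘ₗ h ∘ₗ d = d)
    (π : M →ₗ[K] M) (hπ : π = LinearMap.id - d ∘ₗ h - h ∘ₗ d) :
    LinearMap.range π = LinearMap.ker d ⊓ LinearMap.ker h ∧
    LinearMap.range π = LinearMap.ker (d ∘ₗ h) ⊓ LinearMap.ker (h ∘ₗ d) := by
  subst hπ
  have hdd' : ∀ x : M, d (d x) = 0 := fun x => by simpa using DFunLike.congr_fun hdd x
  have hhh' : ∀ x : M, h (h x) = 0 := fun x => by simpa using DFunLike.congr_fun hhh x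
  have hhdh' : ∀ x : M, h (d (h x)) = h x := fun x => by simpa using DFunLike.congr_fun hhdh x
  have hdhd' : ∀ x : M, d (h (d x)) = d x := fun x => by simpa using DFunLike.congr_fun hdhd x
  have hsub : LinearMap.range (LinearMap.id - d ∘ₗ h - h ∘ₗ d) ≤
      LinearMap.ker d ⊓ LinearMap.ker h := by
    rintro _ ⟨x, rfl⟩
    constructor
    · simp [LinearMap.mem_ker, hdd' (h x), hdhd' x]
    · simp [LinearMap.mem_ker, hhh' (d x), hhdh' x]
  have hfix : ∀ x : M, d (h x) = 0 → h (d x) = 0 →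
      (LinearMap.id - d ∘ₗ h - h ∘ₗ d : M →ₗ[K] M) x = x := by
    intro x h1 h2; simp [h1, h2]
  constructor
  · apply le_antisymm hsub
    rintro x ⟨hx1, hx2⟩
    exact ⟨x, hfix x (by simp [LinearMap.mem_ker.mp hx2]) (by simp [LinearMap.mem_ker.mp hx1])⟩
  · apply le_antisymm
    · intro x hx
      obtain ⟨h1, h2⟩ := hsub hx
      exact ⟨by simp [LinearMap.mem_ker, LinearMap.mem_ker.mp h2],
        by simp [LinearMap.mem_ker, LinearMap.mem_ker.mp h1]⟩
    · rintro x ⟨hx1, hx2⟩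
      exact ⟨x, hfix x hx1 hx2⟩
end

section
/- M decomposes as the internal direct sum of the harmonic subspace and the two ranges: the three submodules range π, range (d ∘ h), and range (h ∘ d) are independent (each meets the sup of the other two trivially) and their sup is all of M; equivalently, every x ∈ M is uniquely the sum of an element of range π, an element of range (d ∘ h), and an element of range (h ∘ d), namely x = π x + (d ∘ h) x + (h ∘ d) x. -/
/-- `M` decomposes as the internal direct sum of the harmonic subspace `range π` and
the two ranges `range (d ∘ h)` and `range (h ∘ d)`: the three submodules are
independent, their sup is all of `M`, and every `x` is uniquely the sum of elements
of the three submodules, namely `x = π x + (d ∘ h) x + (h ∘ d) x`. -/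
theorem hodge_direct_sum_decomposition
    {K : Type*} [CommRing K] {M : Type*} [AddCommGroup M] [Module K M]
    (d h : M →ₗ[K] M)
    (hdd : d ∘ₗ d = 0) (hhh : h ∘ₗ h = 0)
    (hhdh : h ∘ₗ d ∘ₗ h = h) (hdhd : d ∘ₗ h ∘ₗ d = d)
    (π : M →ₗ[K] M) (hπ : π = LinearMap.id - d ∘ₗ h - h ∘ₗ d) :
    (LinearMap.range π ⊓ (LinearMap.range (d ∘ₗ h) ⊔ LinearMap.range (h ∘ₗ d)) = ⊥) ∧
    (LinearMap.range (d ∘ₗ h) ⊓ (LinearMap.range π ⊔ LinearMap.range (h ∘ₗ d)) = ⊥) ∧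
    (LinearMap.range (h ∘ₗ d) ⊓ (LinearMap.range π ⊔ LinearMap.range (d ∘ₗ h)) = ⊥) ∧
    (LinearMap.range π ⊔ LinearMap.range (d ∘ₗ h) ⊔ LinearMap.range (h ∘ₗ d) = ⊤) ∧
    (∀ x : M, x = π x + (d ∘ₗ h) x + (h ∘ₗ d) x) ∧
    (∀ (x a b c : M), a ∈ LinearMap.range π → b ∈ LinearMap.range (d ∘ₗ h) →
      c ∈ LinearMap.range (h ∘ₗ d) → x = a + b + c →
      a = π x ∧ b = (d ∘ₗ h) x ∧ c = (h ∘ₗ d) x) := by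
  have hdd' : ∀ x : M, d (d x) = 0 := fun x => by
    have := LinearMap.ext_iff.mp hdd x; simpa using this
  have hhh' : ∀ x : M, h (h x) = 0 := fun x => by
    have := LinearMap.ext_iff.mp hhh x; simpa using this
  have hhdh' : ∀ x : M, h (d (h x)) = h x := fun x => by
    have := LinearMap.ext_iff.mp hhdh x; simpa using this
  have hdhd' : ∀ x : M, d (h (d x)) = d x := fun x => by
    have := LinearMap.ext_iff.mp hdhd x; simpa using this
  have πapp : ∀ x : M, π x = x - d (h x) - h (d x) := fun x => by
    simp [hπ]
  -- idempotence / orthogonality facts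
  have p2 : ∀ x : M, d (h (d (h x))) = d (h x) := fun x => congrArg d (hhdh' x)
  have p3 : ∀ x : M, h (d (h (d x))) = h (d x) := fun x => hhdh' (d x)
  have q23 : ∀ x : M, d (h (h (d x))) = 0 := fun x => by rw [hhh' (d x)]; simp
  have q32 : ∀ x : M, h (d (d (h x))) = 0 := fun x => by rw [hdd' (h x)]; simp
  have πe2 : ∀ x : M, π (d (h x)) = 0 := fun x => by
    rw [πapp, p2, q32]; abel
  have πe3 : ∀ x : M, π (h (d x)) = 0 := fun x => by
    rw [πapp, p3, q23]; abel
  have e2π : ∀ x : M, d (h (π x)) = 0 := fun x => by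
    rw [πapp]
    simp only [map_sub, p2, q23]
    abel
  have e3π : ∀ x : M, h (d (π x)) = 0 := fun x => by
    rw [πapp]
    simp only [map_sub, p3, q32]
    abel
  have ππ : ∀ x : M, π (π x) = π x := fun x => by
    rw [πapp (π x), e2π, e3π]; abel
  have decomp : ∀ x : M, x = π x + (d ∘ₗ h) x + (h ∘ₗ d) x := fun x => by
    simp only [LinearMap.comp_apply, πapp]; abel
  have uniq : ∀ (x a b c : M), a ∈ LinearMap.range π → b ∈ LinearMap.range (d ∘ₗ h) →
      c ∈ LinearMap.range (h ∘ₗ d) → x = a + b + c →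
      a = π x ∧ b = (d ∘ₗ h) x ∧ c = (h ∘ₗ d) x := by
    rintro x a b c ⟨ya, rfl⟩ ⟨yb, rfl⟩ ⟨yc, rfl⟩ rfl
    simp only [LinearMap.comp_apply] at *
    refine ⟨?_, ?_, ?_⟩
    · simp only [map_add, ππ, πe2, πe3]; abel
    · simp only [map_add, e2π, p2, q23]; abel
    · simp only [map_add, e3π, p3, q32]; abel
  refine ⟨?_, ?_, ?_, ?_, decomp, uniq⟩
  · rw [eq_bot_iff]
    rintro x ⟨⟨y, rfl⟩, hx2⟩
    rcases Submodule.mem_sup.mp hx2 with ⟨b, ⟨yb, rfl⟩, c, ⟨yc, rfl⟩, hbc⟩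
    simp only [LinearMap.comp_apply] at hbc
    have : π (π y) = π (d (h yb) + h (d yc)) := congrArg π hbc.symm
    rw [ππ, map_add, πe2, πe3] at this
    simpa using this
  · rw [eq_bot_iff]
    rintro x ⟨⟨y, rfl⟩, hx2⟩
    rcases Submodule.mem_sup.mp hx2 with ⟨a, ⟨ya, rfl⟩, c, ⟨yc, rfl⟩, hac⟩
    simp only [LinearMap.comp_apply] at hac ⊢
    have : d (h (d (h y))) = d (h (π ya + h (d yc))) := congrArg (fun z => d (h z)) hac.symm
    rw [p2, map_add, map_add] at this
    rw [this, e2π, q23]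
    simp
  · rw [eq_bot_iff]
    rintro x ⟨⟨y, rfl⟩, hx2⟩
    rcases Submodule.mem_sup.mp hx2 with ⟨a, ⟨ya, rfl⟩, b, ⟨yb, rfl⟩, hab⟩
    simp only [LinearMap.comp_apply] at hab ⊢
    have : h (d (h (d y))) = h (d (π ya + d (h yb))) := congrArg (fun z => h (d z)) hab.symm
    rw [p3, map_add, map_add] at this
    rw [this, e3π, q32]
    simp
  · rw [eq_top_iff]
    intro x _
    rw [decomp x]
    refine Submodule.add_mem _ (Submodule.add_mem _ ?_ ?_) ?_
    · exact Submodule.mem_sup_left (Submodule.mem_sup_left ⟨x, rfl⟩)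
    · exact Submodule.mem_sup_left (Submodule.mem_sup_right ⟨x, rfl⟩)
    · exact Submodule.mem_sup_right ⟨x, rfl⟩
end

section
/- The kernel of d is the internal direct sum of the harmonic subspace and the exact elements: ker d = range π ⊔ range d and range π ⊓ range d = ⊥. -/
/-- The kernel of `d` is the internal direct sum of the harmonic subspace and the
exact elements. -/
theorem ker_eq_harmonic_sup_exact
    {K : Type*} [CommRing K] {M : Type*} [AddCommGroup M] [Module K M]
    (d h : M →ₗ[K] M)
    (hdd : d ∘ₗ d = 0) (hhh : h ∘ₗ h = 0)
    (hhdh : h ∘ₗ d ∘ₗ h = h) (hdhd : d ∘ₗ h ∘ₗ d = d)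
    (π : M →ₗ[K] M) (hπ : π = LinearMap.id - d ∘ₗ h - h ∘ₗ d) :
    LinearMap.ker d = LinearMap.range π ⊔ LinearMap.range d ∧
    LinearMap.range π ⊓ LinearMap.range d = ⊥ := by
  have hdd' : ∀ x, d (d x) = 0 := fun x => DFunLike.congr_fun hdd x
  have hdhd' : ∀ x, d (h (d x)) = d x := fun x => DFunLike.congr_fun hdhd x
  have hhdh' : ∀ x, h (d (h x)) = h x := fun x => DFunLike.congr_fun hhdh x
  have hπ' : ∀ x, π x = x - d (h x) - h (d x) := fun x => by
    simp [hπ, LinearMap.sub_apply]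
  have hdπ : ∀ x, d (π x) = 0 := fun x => by
    rw [hπ' x]; simp [map_sub, hdhd', hdd']
  have hhπ : ∀ x, h (π x) = 0 := fun x => by
    have : h (h (d x)) = 0 := by
      have := DFunLike.congr_fun hhh (d x); simpa using this
    rw [hπ' x]; simp [map_sub, hhdh', this]
  constructor
  · apply le_antisymm
    · intro x hx
      have hdx : d x = 0 := hx
      have : x = π x + d (h x) := by
        rw [hπ' x, hdx]; simp
      rw [this]
      exact Submodule.add_mem_sup (LinearMap.mem_range_self π x)
        (LinearMap.mem_range_self d (h x))
    · apply sup_le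
      · rintro _ ⟨x, rfl⟩; exact hdπ x
      · rintro _ ⟨x, rfl⟩; exact hdd' x
  · apply le_antisymm
    · rintro y ⟨⟨a, ha⟩, ⟨b, hb⟩⟩
      have h1 : h y = 0 := by rw [← ha]; exact hhπ a
      have h2 : d (h y) = y := by rw [← hb]; exact hdhd' b
      have : y = 0 := by rw [← h2, h1, map_zero]
      simpa using this
    · exact bot_le
end

section
/- The composition of the inclusion range π ⊆ ker d with the quotient map ker d → ker d ⧸ range d is a linear isomorphism; that is, the harmonic subspace maps bijectively onto the (co)homology ker d / range d of (M, d). -/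
/-- The composition of the inclusion `range π ⊆ ker d` with the quotient map
`ker d → ker d ⧸ range d` is a linear isomorphism: the harmonic subspace maps
bijectively onto the cohomology of `(M, d)`. -/
theorem harmonic_iso_cohomology
    {K : Type*} [CommRing K] {M : Type*} [AddCommGroup M] [Module K M]
    (d h : M →ₗ[K] M)
    (hdd : d ∘ₗ d = 0) (hhh : h ∘ₗ h = 0)
    (hhdh : h ∘ₗ d ∘ₗ h = h) (hdhd : d ∘ₗ h ∘ₗ d = d)
    (π : M →ₗ[K] M) (hπ : π = LinearMap.id - d ∘ₗ h - h ∘ₗ d)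
    (hle : LinearMap.range π ≤ LinearMap.ker d) :
    Function.Bijective
      ((Submodule.comap (LinearMap.ker d).subtype (LinearMap.range d)).mkQ ∘ₗ
        Submodule.inclusion hle) := by
  have hπd : ∀ y : M, π (d y) = 0 := by
    intro y
    have := congrFun (congrArg (fun f => f.toFun) hdhd) y
    simp only [hπ, LinearMap.sub_apply, LinearMap.comp_apply, LinearMap.id_apply]
    have h1 : d (h (d y)) = d y := by
      have := LinearMap.congr_fun hdhd y
      simpa [LinearMap.comp_apply] using this
    have h2 : d (d y) = 0 := by
      have := LinearMap.congr_fun hdd y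
      simpa [LinearMap.comp_apply] using this
    rw [h1, h2]
    simp
  have hππ : ∀ x : M, π (π x) = π x := by
    intro x
    have hdh' : ∀ y, d (h (d y)) = d y := fun y => by
      have := LinearMap.congr_fun hdhd y; simpa [LinearMap.comp_apply] using this
    have hhd' : ∀ y, h (d (h y)) = h y := fun y => by
      have := LinearMap.congr_fun hhdh y; simpa [LinearMap.comp_apply] using this
    have hdd' : ∀ y, d (d y) = 0 := fun y => by
      have := LinearMap.congr_fun hdd y; simpa [LinearMap.comp_apply] using this
    have hhh' : ∀ y, h (h y) = 0 := fun y => by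
      have := LinearMap.congr_fun hhh y; simpa [LinearMap.comp_apply] using this
    simp only [hπ, LinearMap.sub_apply, LinearMap.comp_apply, LinearMap.id_apply]
    simp only [map_sub, hdd', hhh', hdh', hhd', map_zero]
    abel
  constructor
  · rw [← LinearMap.ker_eq_bot, LinearMap.ker_eq_bot']
    intro x hx
    have hx' : (x : M) ∈ LinearMap.range d := by
      have : Submodule.inclusion hle x ∈
          Submodule.comap (LinearMap.ker d).subtype (LinearMap.range d) := by
        rwa [← Submodule.Quotient.mk_eq_zero, ← Submodule.mkQ_apply,
          ← LinearMap.comp_apply]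
      simpa using this
    obtain ⟨y, hy⟩ := hx'
    obtain ⟨xv, hxv⟩ := x
    obtain ⟨m, hm⟩ := hxv
    ext
    simp only [Submodule.coe_zero, ZeroMemClass.coe_zero]
    have hxv1 : xv = π m := hm.symm
    have : π xv = xv := by rw [hxv1, hππ]
    rw [← this]
    have : xv = d y := by simpa using hy.symm
    rw [this, hπd]
  · intro q
    obtain ⟨z, rfl⟩ := Submodule.mkQ_surjective _ q
    refine ⟨⟨π (z : M), LinearMap.mem_range_self π _⟩, ?_⟩
    simp only [LinearMap.comp_apply, Submodule.mkQ_apply]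
    rw [Submodule.Quotient.eq, Submodule.mem_comap]
    refine ⟨-(h (z : M)), ?_⟩
    have hz : d (z : M) = 0 := z.2
    have : ((Submodule.inclusion hle ⟨π (z : M), LinearMap.mem_range_self π _⟩
        - z : LinearMap.ker d) : M) = π (z : M) - (z : M) := rfl
    rw [Submodule.subtype_apply, this, hπ]
    simp only [LinearMap.sub_apply, LinearMap.comp_apply, LinearMap.id_apply,
      map_neg, hz, map_zero]
    abel
end

section
/- The harmonic elements, equipped with the zero differential, form a subcomplex H of C (H^k := range π_k, on which d vanishes), and the inclusion H → C is a quasi-isomorphism: it induces an isomorphism on cohomology in every degree. -/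
/-- The harmonic elements `range (π k)`, equipped with the zero differential, form a
subcomplex of `C` (the differential `d` vanishes on them), and the inclusion into `C`
is a quasi-isomorphism: in every degree, the composition of the inclusion
`range π ⊆ ker d` with the quotient map onto cohomology `ker d ⧸ range d` is bijective.
Here `d k : C k → C (k+1)` and `h k : C (k+1) → C k`, and `π k : C (k+1) → C (k+1)`
is the harmonic projection in degree `k+1`. -/
theorem harmonic_subcomplex_quasi_iso
    {K : Type*} [CommRing K] (C : ℤ → Type*)
    [∀ k, AddCommGroup (C k)] [∀ k, Module K (C k)]
    (d : ∀ k, C k →ₗ[K] C (k + 1)) (h : ∀ k, C (k + 1) →ₗ[K] C k)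
    (hdd : ∀ k, d (k + 1) ∘ₗ d k = 0)
    (hhh : ∀ k, h k ∘ₗ h (k + 1) = 0)
    (hhdh : ∀ k, h k ∘ₗ d k ∘ₗ h k = h k)
    (hdhd : ∀ k, d k ∘ₗ h k ∘ₗ d k = d k)
    (π : ∀ k, C (k + 1) →ₗ[K] C (k + 1))
    (hπ : ∀ k, π k = LinearMap.id - d k ∘ₗ h k - h (k + 1) ∘ₗ d (k + 1)) :
    (∀ k, ∀ x ∈ LinearMap.range (π k), d (k + 1) x = 0) ∧
    (∀ (hle : ∀ k, LinearMap.range (π k) ≤ LinearMap.ker (d (k + 1))) (k : ℤ),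
      Function.Bijective
        ((Submodule.comap (LinearMap.ker (d (k + 1))).subtype
            (LinearMap.range (d k))).mkQ ∘ₗ
          Submodule.inclusion (hle k))) := by

  -- pointwise versions of hypotheses
  have hdd' : ∀ k (x : C k), d (k+1) (d k x) = 0 := fun k x => by
    simpa using LinearMap.congr_fun (hdd k) x
  have hhh' : ∀ k (x : C (k+1+1)), h k (h (k+1) x) = 0 := fun k x => by
    simpa using LinearMap.congr_fun (hhh k) x
  have hhdh' : ∀ k (x : C (k+1)), h k (d k (h k x)) = h k x := fun k x => by
    simpa using LinearMap.congr_fun (hhdh k) x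
  have hdhd' : ∀ k (x : C k), d k (h k (d k x)) = d k x := fun k x => by
    simpa using LinearMap.congr_fun (hdhd k) x
  have hπ' : ∀ k (x : C (k+1)), π k x = x - d k (h k x) - h (k+1) (d (k+1) x) :=
    fun k x => by simpa using LinearMap.congr_fun (hπ k) x
  have hdπ : ∀ k (x : C (k+1)), d (k+1) (π k x) = 0 := by
    intro k x
    rw [hπ']
    simp [map_sub, hdd', hdhd']
  have hπd : ∀ k (z : C k), π k (d k z) = 0 := by
    intro k z
    rw [hπ']
    simp [hdhd', hdd']
  have hhπ : ∀ k (x : C (k+1)), h k (π k x) = 0 := by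
    intro k x
    rw [hπ']
    simp [map_sub, hhdh', hhh']
  have hππ : ∀ k (x : C (k+1)), π k (π k x) = π k x := by
    intro k x
    conv_lhs => rw [hπ' k (π k x)]
    simp [hhπ, hdπ]
  refine ⟨fun k x hx => ?_, fun hle k => ?_⟩
  · obtain ⟨y, rfl⟩ := hx
    exact hdπ k y
  · constructor
    · rw [← LinearMap.ker_eq_bot]
      rw [Submodule.eq_bot_iff]
      intro a ha
      rw [LinearMap.mem_ker, LinearMap.comp_apply, Submodule.mkQ_apply,
        Submodule.Quotient.mk_eq_zero, Submodule.mem_comap] at ha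
      obtain ⟨z, hz⟩ := ha
      apply Subtype.ext
      have h1 : (a : C (k+1)) = d k z := hz.symm
      have h2 : π k (a : C (k+1)) = a := by
        obtain ⟨y, hy⟩ := a.2
        rw [← hy, hππ]
      rw [← h2, h1, hπd]
      rfl
    · intro y
      obtain ⟨x, rfl⟩ := Submodule.mkQ_surjective _ y
      refine ⟨⟨π k x, LinearMap.mem_range_self _ _⟩, ?_⟩
      simp only [LinearMap.comp_apply, Submodule.mkQ_apply]
      rw [Submodule.Quotient.eq]
      refine Submodule.mem_comap.mpr ⟨-(h k (x : C (k+1))), ?_⟩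
      have hx0 : d (k+1) (x : C (k+1)) = 0 := x.2
      have : π k (x : C (k+1)) - x = -(d k (h k (x : C (k+1)))) := by
        rw [hπ', hx0]; simp
      simp only [map_neg, map_sub, Submodule.coe_subtype]
      rw [← this]
      rfl
end
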